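/- arXiv:2512.13992 — 2 statements merged into one kernel-verified Lean document; each statement's English description precedes it below -/
import Mathlib

section
/- Risk transfer under independent variance estimation: Let Y_1,...,Y_p be independent with Y_i ~ N(θ_i, λ) for λ > 0, set V_i = θ_i², and let V̂ = (V̂_1,...,V̂_p) be a random vector with nonnegative coordinates, independent of Y. Define θ̂_i = g_λ(V̂_i)·Y_i and θ_i^or = g_λ(V_i)·Y_i, where g_λ(x) = x/(x+λ). Then E‖θ̂ - θ^or‖² ≤ Σ_{i=1}^p E[(V̂_i - V_i)²/(V_i + λ)]. -/
open MeasureTheory ProbabilityTheory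
open scoped NNReal ENNReal

/-!
Coordinatewise, the loss is `(g(V̂ᵢ) - g(Vᵢ))² Yᵢ²`. Independence of `V̂` and `Y` factors its
expectation as `E[(g(V̂ᵢ) - g(Vᵢ))²] · (Vᵢ + λ)`, using `E[Yᵢ²] = θᵢ² + λ`, and since
`g(a) - g(b) = λ (a - b) / ((a + λ)(b + λ))` with `λ ≤ a + λ`, we get
`(g(a) - g(b))² (b + λ) ≤ (a - b)² / (b + λ)` for `a, b ≥ 0`.
-/

lemma lintegral_ofReal_sq_gaussianReal (m : ℝ) (v : ℝ≥0) :
    ∫⁻ x, ENNReal.ofReal (x ^ 2) ∂gaussianReal m v = ENNReal.ofReal (m ^ 2 + v) := by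
  have hL2 : MemLp id 2 (gaussianReal m v) := memLp_id_gaussianReal 2
  have hmoment : ∫ x, x ^ 2 ∂gaussianReal m v = m ^ 2 + v := by
    have hvar := variance_eq_sub hL2
    simp only [variance_id_gaussianReal, id, Pi.pow_apply, integral_id_gaussianReal] at hvar
    linarith
  rw [← hmoment, ofReal_integral_eq_lintegral_ofReal (f := fun x => x ^ 2) hL2.integrable_sq
    (ae_of_all _ fun x => sq_nonneg x)]

lemma lintegral_ofReal_sq_of_map_eq_gaussianReal {Ω : Type*} [MeasurableSpace Ω]
    {μ : Measure Ω} {Z : Ω → ℝ} {m : ℝ} {v : ℝ≥0} (hZ : Measurable Z)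
    (hlaw : μ.map Z = gaussianReal m v) :
    ∫⁻ ω, ENNReal.ofReal (Z ω ^ 2) ∂μ = ENNReal.ofReal (m ^ 2 + v) := by
  rw [← lintegral_ofReal_sq_gaussianReal, ← hlaw,
    lintegral_map (f := fun x => ENNReal.ofReal (x ^ 2)) (by fun_prop) hZ]

lemma lintegral_ofReal_mul_sq_of_indepFun {Ω : Type*} [MeasurableSpace Ω] {μ : Measure Ω}
    {X Z : Ω → ℝ} (hX : Measurable X) (hZ : Measurable Z) (hXZ : IndepFun X Z μ) :
    ∫⁻ ω, ENNReal.ofReal ((X ω * Z ω) ^ 2) ∂μ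
      = (∫⁻ ω, ENNReal.ofReal (X ω ^ 2) ∂μ) * ∫⁻ ω, ENNReal.ofReal (Z ω ^ 2) ∂μ := by
  have hsq : Measurable fun x : ℝ => ENNReal.ofReal (x ^ 2) := by fun_prop
  simp_rw [mul_pow, ENNReal.ofReal_mul (sq_nonneg _)]
  exact lintegral_mul_eq_lintegral_mul_lintegral_of_indepFun'' (hsq.comp hX).aemeasurable
    (hsq.comp hZ).aemeasurable (hXZ.comp hsq hsq)

lemma sq_div_add_sub_div_add_mul_le {a b lam : ℝ} (hlam : 0 < lam) (ha : 0 ≤ a) (hb : 0 ≤ b) :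
    (a / (a + lam) - b / (b + lam)) ^ 2 * (b + lam) ≤ (a - b) ^ 2 / (b + lam) := by
  have hb' : 0 < b + lam := by linarith
  have hdiff : a / (a + lam) - b / (b + lam) = lam * (a - b) / ((a + lam) * (b + lam)) := by
    field_simp
    ring
  rw [hdiff, div_pow, div_mul_eq_mul_div, div_le_div_iff₀ (by positivity) hb']
  have hlam_sq : lam ^ 2 ≤ (a + lam) ^ 2 := by nlinarith
  have hnonneg : 0 ≤ (a - b) ^ 2 * (b + lam) ^ 2 := by positivity
  nlinarith [mul_le_mul_of_nonneg_left hlam_sq hnonneg]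

lemma lintegral_ofReal_sq_shrink_mul_sub_le_of_indepFun {Ω : Type*} [MeasurableSpace Ω] {μ : Measure Ω}
    {X Z : Ω → ℝ} {b lam : ℝ} (hlam : 0 < lam) (hb : 0 ≤ b) (hX : Measurable X)
    (hZ : Measurable Z) (hX0 : ∀ ω, 0 ≤ X ω) (hXZ : IndepFun X Z μ)
    (hZ2 : ∫⁻ ω, ENNReal.ofReal (Z ω ^ 2) ∂μ = ENNReal.ofReal (b + lam)) :
    ∫⁻ ω, ENNReal.ofReal ((X ω / (X ω + lam) * Z ω - b / (b + lam) * Z ω) ^ 2) ∂μ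
      ≤ ∫⁻ ω, ENNReal.ofReal ((X ω - b) ^ 2 / (b + lam)) ∂μ := by
  set G : Ω → ℝ := fun ω => X ω / (X ω + lam) - b / (b + lam)
  have hG : Measurable G := by fun_prop
  calc ∫⁻ ω, ENNReal.ofReal ((X ω / (X ω + lam) * Z ω - b / (b + lam) * Z ω) ^ 2) ∂μ
      = ∫⁻ ω, ENNReal.ofReal ((G ω * Z ω) ^ 2) ∂μ := by simp only [G, sub_mul]
    _ = ∫⁻ ω, ENNReal.ofReal (G ω ^ 2 * (b + lam)) ∂μ := by
        rw [lintegral_ofReal_mul_sq_of_indepFun hG hZ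
          (hXZ.comp (φ := fun x => x / (x + lam) - b / (b + lam)) (by fun_prop) measurable_id),
          hZ2, ← lintegral_mul_const' _ _ ENNReal.ofReal_ne_top]
        simp only [ENNReal.ofReal_mul (sq_nonneg _)]
    _ ≤ ∫⁻ ω, ENNReal.ofReal ((X ω - b) ^ 2 / (b + lam)) ∂μ :=
        lintegral_mono fun ω => ENNReal.ofReal_le_ofReal
          (sq_div_add_sub_div_add_mul_le hlam (hX0 ω) hb)

theorem risk_transfer_independent_variance_general
    {Ω : Type*} [MeasurableSpace Ω] (μ : Measure Ω)
    (p : ℕ) (lam : ℝ) (hlam : 0 < lam) (θ : Fin p → ℝ)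
    (Y Vhat : Ω → Fin p → ℝ)
    (hYmeas : Measurable Y) (hVmeas : Measurable Vhat)
    (hYlaw : ∀ i : Fin p,
      Measure.map (fun ω => Y ω i) μ = gaussianReal (θ i) lam.toNNReal)
    (hVnonneg : ∀ ω i, 0 ≤ Vhat ω i)
    (hindep : IndepFun Vhat Y μ) :
    ∫⁻ ω, ENNReal.ofReal
        (∑ i, (Vhat ω i / (Vhat ω i + lam) * Y ω i
              - θ i ^ 2 / (θ i ^ 2 + lam) * Y ω i) ^ 2) ∂μ
      ≤ ∑ i, ∫⁻ ω, ENNReal.ofReal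
          ((Vhat ω i - θ i ^ 2) ^ 2 / (θ i ^ 2 + lam)) ∂μ := by
  have hYi (i : Fin p) : Measurable fun ω => Y ω i := (measurable_pi_apply i).comp hYmeas
  have hVi (i : Fin p) : Measurable fun ω => Vhat ω i := (measurable_pi_apply i).comp hVmeas
  simp_rw [ENNReal.ofReal_sum_of_nonneg fun i _ => sq_nonneg _]
  rw [lintegral_finsetSum' _ fun i _ => by fun_prop]
  refine Finset.sum_le_sum fun i _ => ?_
  refine lintegral_ofReal_sq_shrink_mul_sub_le_of_indepFun hlam (sq_nonneg _) (hVi i) (hYi i)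
    (hVnonneg · i) (hindep.comp (measurable_pi_apply i) (measurable_pi_apply i)) ?_
  rw [lintegral_ofReal_sq_of_map_eq_gaussianReal (hYi i) (hYlaw i),
    Real.coe_toNNReal _ hlam.le]

/-- Risk transfer under independent variance estimation: if `Y_i ~ N(θ_i, λ)` are
independent, `V_i = θ_i²`, and `V̂` is a nonnegative random vector independent of `Y`,
then with `g_λ(x) = x/(x+λ)`, `θ̂_i = g_λ(V̂_i) Y_i`, `θ_i^or = g_λ(V_i) Y_i`, we have
`E‖θ̂ - θ^or‖² ≤ Σ_i E[(V̂_i - V_i)²/(V_i + λ)]`. -/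
theorem risk_transfer_independent_variance
    {Ω : Type*} [MeasurableSpace Ω] (μ : Measure Ω) [IsProbabilityMeasure μ]
    (p : ℕ) (lam : ℝ) (hlam : 0 < lam) (θ : Fin p → ℝ)
    (Y Vhat : Ω → Fin p → ℝ)
    (hYmeas : Measurable Y) (hVmeas : Measurable Vhat)
    (hYlaw : ∀ i : Fin p,
      Measure.map (fun ω => Y ω i) μ = gaussianReal (θ i) lam.toNNReal)
    (hYindep : iIndepFun
      (fun i ω => Y ω i) μ)
    (hVnonneg : ∀ ω i, 0 ≤ Vhat ω i)
    (hindep : IndepFun Vhat Y μ) :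
    ∫⁻ ω, ENNReal.ofReal
        (∑ i, (Vhat ω i / (Vhat ω i + lam) * Y ω i
              - θ i ^ 2 / (θ i ^ 2 + lam) * Y ω i) ^ 2) ∂μ
      ≤ ∑ i, ∫⁻ ω, ENNReal.ofReal
          ((Vhat ω i - θ i ^ 2) ^ 2 / (θ i ^ 2 + lam)) ∂μ :=
  risk_transfer_independent_variance_general μ p lam hlam θ Y Vhat hYmeas hVmeas hYlaw hVnonneg
    hindep
end

section
/- Minimax lower bound via Assouad's construction: in the Gaussian sequence model Y_i = θ_i + ε_i with ε_i i.i.d. N(0, λ), λ = σ²/n ≤ R, for any estimator θ̃ (measurable function of Y), sup over θ in the ordered sparse class Θ↓(s,R) of E_θ‖θ̃ - θ‖² is at least c·s·λ, where c = Φ(-1)/2 and Φ is the standard normal CDF. -/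
open MeasureTheory ProbabilityTheory

/-- The ordered sparse class `Θ↓(s,R)`. -/
def orderedSparseClass (p s : ℕ) (R : ℝ) : Set (Fin p → ℝ) :=
  {θ | ∃ k ≤ s,
    (∀ i j : Fin p, i ≤ j → j.val < k → θ j ^ 2 ≤ θ i ^ 2) ∧
    (∀ i : Fin p, θ i ^ 2 ≤ R) ∧
    (∀ i : Fin p, k ≤ i.val → θ i = 0)}

/-- The standard normal CDF. -/
noncomputable def stdNormalCDF (x : ℝ) : ℝ :=
  (gaussianReal 0 1 (Set.Iic x)).toReal

/-!
Assouad's construction. Every vertex of the cube `{±√λ}^s × {0}^(p-s)` lies in `Θ↓(s,R)`. Two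
vertices that differ only in coordinate `i` have Gaussian product laws that differ only in the
`i`-th factor, and on `(-∞, 0]` the density of `N(√λ, λ)` lies below that of `N(-√λ, λ)`; since
`(t - √λ)² + (t + √λ)² ≥ 2λ`, their two coordinate-`i` risks add up to at least `2λ·Φ(-1)`.
Averaging over the cube, some vertex has risk at least `s·λ·Φ(-1)`.
-/

open Set
open scoped ENNReal NNReal

lemma gaussianReal_Iic (m x : ℝ) {v : ℝ≥0} (hv : v ≠ 0) :
    gaussianReal m v (Iic x) = gaussianReal 0 1 (Iic ((x - m) / √(v : ℝ))) := by
  have hσ : 0 < √(v : ℝ) := Real.sqrt_pos.2 (by positivity)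
  have hmap : gaussianReal m v = ((gaussianReal 0 1).map (√(v : ℝ) * ·)).map (· + m) := by
    rw [gaussianReal_map_const_mul, gaussianReal_map_add_const, mul_zero, zero_add, mul_one]
    congr
    ext
    simp
  have hpre : (fun z => √(v : ℝ) * z) ⁻¹' ((· + m) ⁻¹' Iic x) = Iic ((x - m) / √(v : ℝ)) := by
    ext z
    simp only [mem_preimage, mem_Iic, le_div_iff₀ hσ]
    constructor <;> intro h <;> linarith
  rw [hmap, Measure.map_apply (measurable_add_const m) measurableSet_Iic,
    Measure.map_apply (measurable_const_mul _)
      (measurableSet_Iic.preimage (measurable_add_const m)), hpre]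

lemma gaussianReal_sqrt_Iic_zero {v : ℝ} (hv : 0 < v) :
    gaussianReal √v v.toNNReal (Iic 0) = ENNReal.ofReal (stdNormalCDF (-1)) := by
  rw [gaussianReal_Iic _ _ (by simpa using hv), Real.coe_toNNReal _ hv.le, zero_sub,
    neg_div, div_self (Real.sqrt_pos.2 hv).ne', stdNormalCDF,
    ENNReal.ofReal_toReal (measure_ne_top _ _)]

lemma gaussianPDFReal_le_gaussianPDFReal_neg {a x : ℝ} (ha : 0 ≤ a) (hx : x ≤ 0) (v : ℝ≥0) :
    gaussianPDFReal a v x ≤ gaussianPDFReal (-a) v x := by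
  simp only [gaussianPDFReal]
  gcongr _ * Real.exp (?_ / _)
  nlinarith [mul_nonneg ha (neg_nonneg.2 hx)]

lemma gaussianReal_restrict_Iic_zero_le {a : ℝ} (ha : 0 ≤ a) {v : ℝ≥0} (hv : v ≠ 0) :
    (gaussianReal a v).restrict (Iic 0) ≤ (gaussianReal (-a) v).restrict (Iic 0) := by
  refine Measure.le_iff.2 fun t ht => ?_
  rw [Measure.restrict_apply ht, Measure.restrict_apply ht,
    gaussianReal_apply _ hv, gaussianReal_apply _ hv]
  refine setLIntegral_mono (measurable_gaussianPDF _ _) fun x hx => ?_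
  exact ENNReal.ofReal_le_ofReal (gaussianPDFReal_le_gaussianPDFReal_neg ha hx.2 v)

lemma mul_measure_le_lintegral_add_lintegral {α : Type*} [MeasurableSpace α]
    {μ ν : Measure α} {S : Set α} (hμν : μ.restrict S ≤ ν.restrict S)
    {F G : α → ℝ≥0∞} (hF : Measurable F) {c : ℝ≥0∞} (hFG : ∀ x, c ≤ F x + G x) :
    c * μ S ≤ ∫⁻ x, F x ∂μ + ∫⁻ x, G x ∂ν :=
  calc c * μ S = ∫⁻ _ in S, c ∂μ := (setLIntegral_const S c).symm
    _ ≤ ∫⁻ x in S, F x + G x ∂μ := lintegral_mono hFG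
    _ = ∫⁻ x in S, F x ∂μ + ∫⁻ x in S, G x ∂μ := lintegral_add_left hF _
    _ ≤ ∫⁻ x, F x ∂μ + ∫⁻ x in S, G x ∂ν :=
        add_le_add (setLIntegral_le_lintegral _ _) (lintegral_mono' hμν le_rfl)
    _ ≤ ∫⁻ x, F x ∂μ + ∫⁻ x, G x ∂ν := add_le_add le_rfl (setLIntegral_le_lintegral _ _)

lemma mul_measure_le_lintegral_pi_add_lintegral_pi {ι : Type*} [Fintype ι] [DecidableEq ι]
    {X : ι → Type*} [∀ j, MeasurableSpace (X j)] {μ ν : ∀ j, Measure (X j)}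
    [∀ j, IsProbabilityMeasure (μ j)] [∀ j, IsProbabilityMeasure (ν j)]
    {i : ι} (hμν : ∀ j ≠ i, μ j = ν j) {S : Set (X i)}
    (hS : (μ i).restrict S ≤ (ν i).restrict S) {F G : (∀ j, X j) → ℝ≥0∞}
    (hF : Measurable F) (hG : Measurable G) {c : ℝ≥0∞} (hFG : ∀ x, c ≤ F x + G x) :
    c * μ i S ≤ ∫⁻ x, F x ∂Measure.pi μ + ∫⁻ x, G x ∂Measure.pi ν := by
  have x₀ : ∀ j, X j := fun j => (nonempty_of_isProbabilityMeasure (μ j)).some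
  have hmarg : ∫⋯∫⁻_(Finset.univ.erase i), G ∂ν = ∫⋯∫⁻_(Finset.univ.erase i), G ∂μ := by
    have : (fun j : ↥(Finset.univ.erase i) => ν j) = fun j : ↥(Finset.univ.erase i) => μ j :=
      funext fun j => (hμν j (Finset.ne_of_mem_erase j.2)).symm
    ext x
    simp only [lmarginal, this]
  rw [lintegral_eq_lmarginal_univ x₀, lintegral_eq_lmarginal_univ x₀,
    lmarginal_erase F hF (Finset.mem_univ i), lmarginal_erase G hG (Finset.mem_univ i), hmarg]
  refine mul_measure_le_lintegral_add_lintegral hS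
    ((hF.lmarginal μ).comp (measurable_update x₀)) fun t => ?_
  simp only [Function.comp_apply, lmarginal]
  calc c = ∫⁻ _, c ∂Measure.pi fun j : ↥(Finset.univ.erase i) => μ j := by simp
    _ ≤ _ := lintegral_mono fun y => hFG _
    _ = _ := lintegral_add_left (hF.comp measurable_updateFinset) _

noncomputable def gaussianSeqMeasure {ι : Type*} [Fintype ι] (θ : ι → ℝ) (lam : ℝ) :
    Measure (ι → ℝ) :=
  Measure.pi fun i => gaussianReal (θ i) lam.toNNReal

lemma le_lintegral_sq_sub_add_lintegral_sq_sub {ι : Type*} [Fintype ι] [DecidableEq ι]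
    {lam : ℝ} (hlam : 0 < lam) {f : (ι → ℝ) → ℝ} (hf : Measurable f) {θ θ' : ι → ℝ} {i : ι}
    (hθ : θ i = √lam) (hθ' : θ' i = -√lam) (hθθ' : ∀ j ≠ i, θ j = θ' j) :
    2 * (ENNReal.ofReal lam * ENNReal.ofReal (stdNormalCDF (-1)))
      ≤ ∫⁻ y, ENNReal.ofReal ((f y - θ i) ^ 2) ∂gaussianSeqMeasure θ lam
        + ∫⁻ y, ENNReal.ofReal ((f y - θ' i) ^ 2) ∂gaussianSeqMeasure θ' lam := by
  have hv : lam.toNNReal ≠ 0 := by simpa using hlam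
  have hS : (gaussianReal (θ i) lam.toNNReal).restrict (Iic 0)
      ≤ (gaussianReal (θ' i) lam.toNNReal).restrict (Iic 0) := by
    rw [hθ, hθ']
    exact gaussianReal_restrict_Iic_zero_le (Real.sqrt_nonneg lam) hv
  have hsq : ∀ y, 2 * ENNReal.ofReal lam
      ≤ ENNReal.ofReal ((f y - θ i) ^ 2) + ENNReal.ofReal ((f y - θ' i) ^ 2) := fun y =>
    calc 2 * ENNReal.ofReal lam = ENNReal.ofReal (2 * lam) := by
          rw [ENNReal.ofReal_mul zero_le_two, ENNReal.ofReal_ofNat]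
      _ ≤ ENNReal.ofReal ((f y - θ i) ^ 2 + (f y - θ' i) ^ 2) := by
          gcongr
          rw [hθ, hθ']
          nlinarith [Real.sq_sqrt hlam.le, sq_nonneg (f y)]
      _ ≤ _ := ENNReal.ofReal_add_le
  have := mul_measure_le_lintegral_pi_add_lintegral_pi
    (μ := fun j => gaussianReal (θ j) lam.toNNReal) (ν := fun j => gaussianReal (θ' j) lam.toNNReal)
    (fun j hj => by rw [hθθ' j hj]) hS
    (((hf.sub_const _).pow_const 2).ennreal_ofReal)
    (((hf.sub_const _).pow_const 2).ennreal_ofReal) hsq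
  have hmass : gaussianReal (θ i) lam.toNNReal (Iic 0) = ENNReal.ofReal (stdNormalCDF (-1)) := by
    rw [hθ, gaussianReal_sqrt_Iic_zero hlam]
  rwa [hmass, mul_assoc] at this

lemma sum_lintegral_ofReal_le_lintegral_ofReal_sum {α ι : Type*} [MeasurableSpace α]
    [Fintype ι] {μ : Measure α} {f : ι → α → ℝ} (hf : ∀ i, Measurable (f i))
    (hf₀ : ∀ i x, 0 ≤ f i x) (S : Finset ι) :
    ∑ i ∈ S, ∫⁻ x, ENNReal.ofReal (f i x) ∂μ ≤ ∫⁻ x, ENNReal.ofReal (∑ i, f i x) ∂μ := by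
  rw [← lintegral_finsetSum S fun i _ => (hf i).ennreal_ofReal]
  refine lintegral_mono fun x => ?_
  rw [ENNReal.ofReal_sum_of_nonneg fun i _ => hf₀ i x]
  exact Finset.sum_le_sum_of_subset (Finset.subset_univ S)

lemma exists_card_mul_le_sum_of_le_add_update_not {ι : Type*} [Fintype ι] [DecidableEq ι]
    (r : (ι → Bool) → ι → ℝ≥0∞) (S : Finset ι) {c : ℝ≥0∞}
    (h : ∀ τ, ∀ i ∈ S, 2 * c ≤ r τ i + r (Function.update τ i (!τ i)) i) :
    ∃ τ, S.card * c ≤ ∑ i ∈ S, r τ i := by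
  have hflip (i : ι) : ∑ τ, r (Function.update τ i (!τ i)) i = ∑ τ, r τ i := by
    have hinv : Function.Involutive fun τ : ι → Bool => Function.update τ i (!τ i) :=
      fun τ => by simp
    exact Fintype.sum_bijective _ hinv.bijective _ _ fun τ => rfl
  have hsum : ∑ _τ : ι → Bool, 2 * (S.card * c) ≤ ∑ τ, 2 * ∑ i ∈ S, r τ i :=
    calc ∑ _τ : ι → Bool, 2 * (S.card * c) = ∑ i ∈ S, ∑ _τ : ι → Bool, 2 * c := by
          simp only [Finset.sum_const, nsmul_eq_mul]
          ring
      _ ≤ ∑ i ∈ S, ∑ τ, (r τ i + r (Function.update τ i (!τ i)) i) :=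
          Finset.sum_le_sum fun i hi => Finset.sum_le_sum fun τ _ => h τ i hi
      _ = ∑ τ, 2 * ∑ i ∈ S, r τ i := by
          simp only [Finset.sum_add_distrib, hflip, ← two_mul, Finset.mul_sum]
          exact Finset.sum_comm
  obtain ⟨τ, -, hτ⟩ := ENNReal.exists_le_of_sum_le Finset.univ_nonempty hsum
  exact ⟨τ, (ENNReal.mul_le_mul_iff_right two_ne_zero ENNReal.ofNat_ne_top).1 hτ⟩

def hypercubeVertex (s : ℕ) (a : ℝ) {p : ℕ} (τ : Fin p → Bool) : Fin p → ℝ :=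
  fun j => if (j : ℕ) < s then (if τ j then a else -a) else 0

lemma hypercubeVertex_mem_orderedSparseClass {p s : ℕ} {a R : ℝ} (ha : a ^ 2 ≤ R)
    (τ : Fin p → Bool) : hypercubeVertex s a τ ∈ orderedSparseClass p s R := by
  have hsq (j : Fin p) : hypercubeVertex s a τ j ^ 2 = if (j : ℕ) < s then a ^ 2 else 0 := by
    unfold hypercubeVertex
    split_ifs <;> simp
  refine ⟨s, le_rfl, fun i j hij hj => ?_, fun i => ?_, fun i hi => ?_⟩
  · rw [hsq, hsq, if_pos hj, if_pos ((Fin.le_iff_val_le_val.1 hij).trans_lt hj)]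
  · rw [hsq]
    split_ifs
    exacts [ha, (sq_nonneg a).trans ha]
  · simp [hypercubeVertex, not_lt.2 hi]

lemma le_lintegral_sq_sub_hypercubeVertex_add_update_not {p s : ℕ} {lam : ℝ} (hlam : 0 < lam)
    {f : (Fin p → ℝ) → ℝ} (hf : Measurable f) (τ : Fin p → Bool) {i : Fin p} (hi : (i : ℕ) < s) :
    2 * (ENNReal.ofReal lam * ENNReal.ofReal (stdNormalCDF (-1)))
      ≤ ∫⁻ y, ENNReal.ofReal ((f y - hypercubeVertex s √lam τ i) ^ 2)
            ∂gaussianSeqMeasure (hypercubeVertex s √lam τ) lam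
        + ∫⁻ y, ENNReal.ofReal ((f y - hypercubeVertex s √lam (Function.update τ i (!τ i)) i) ^ 2)
            ∂gaussianSeqMeasure (hypercubeVertex s √lam (Function.update τ i (!τ i))) lam := by
  wlog hτ : τ i = true generalizing τ
  · simpa [add_comm] using this (Function.update τ i (!τ i)) (by simpa using hτ)
  exact le_lintegral_sq_sub_add_lintegral_sq_sub hlam hf
    (by simp [hypercubeVertex, hi, hτ]) (by simp [hypercubeVertex, hi, hτ])
    fun j hj => by simp [hypercubeVertex, Function.update_of_ne hj]

theorem minimax_lower_bound_ordered_sparse_general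
    (p s : ℕ) (hsp : s ≤ p)
    (lam R : ℝ) (hlam : 0 < lam) (hlamR : lam ≤ R)
    (est : (Fin p → ℝ) → Fin p → ℝ) (hest : Measurable est) :
    ENNReal.ofReal (stdNormalCDF (-1) / 2 * s * lam)
      ≤ ⨆ (θ : Fin p → ℝ) (_ : θ ∈ orderedSparseClass p s R),
          ∫⁻ y, ENNReal.ofReal (∑ i, (est y i - θ i) ^ 2)
            ∂(Measure.pi fun i => gaussianReal (θ i) lam.toNNReal) := by
  set θ : (Fin p → Bool) → Fin p → ℝ := hypercubeVertex s √lam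
  set r : (Fin p → Bool) → Fin p → ℝ≥0∞ := fun τ i =>
    ∫⁻ y, ENNReal.ofReal ((est y i - θ τ i) ^ 2) ∂gaussianSeqMeasure (θ τ) lam
  set S : Finset (Fin p) := {i : Fin p | (i : ℕ) < s}
  have hest_coord (i : Fin p) : Measurable fun y => est y i := (measurable_pi_apply i).comp hest
  obtain ⟨τ, hτ⟩ := exists_card_mul_le_sum_of_le_add_update_not r S fun τ i hi =>
    le_lintegral_sq_sub_hypercubeVertex_add_update_not hlam (hest_coord i) τ
      (Finset.mem_filter.1 hi).2
  have hS : S.card = s := by simp [S, Fin.card_filter_val_lt, hsp]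
  calc ENNReal.ofReal (stdNormalCDF (-1) / 2 * s * lam)
      ≤ S.card * (ENNReal.ofReal lam * ENNReal.ofReal (stdNormalCDF (-1))) := by
        rw [hS, ← ENNReal.ofReal_mul hlam.le, ← ENNReal.ofReal_natCast,
          ← ENNReal.ofReal_mul s.cast_nonneg]
        have hΦ : 0 ≤ stdNormalCDF (-1) := ENNReal.toReal_nonneg
        exact ENNReal.ofReal_le_ofReal
          (by nlinarith [mul_nonneg (mul_nonneg hΦ s.cast_nonneg) hlam.le])
    _ ≤ ∑ i ∈ S, r τ i := hτ
    _ ≤ ∫⁻ y, ENNReal.ofReal (∑ i, (est y i - θ τ i) ^ 2) ∂gaussianSeqMeasure (θ τ) lam :=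
        sum_lintegral_ofReal_le_lintegral_ofReal_sum
          (fun i => ((hest_coord i).sub_const _).pow_const 2) (fun _ _ => sq_nonneg _) S
    _ ≤ _ := le_iSup₂ (f := fun θ _ => ∫⁻ y, ENNReal.ofReal (∑ i, (est y i - θ i) ^ 2)
          ∂gaussianSeqMeasure θ lam) (θ τ)
        (hypercubeVertex_mem_orderedSparseClass (by rwa [Real.sq_sqrt hlam.le]) τ)

/-- Minimax lower bound via Assouad's construction: in the Gaussian sequence model
with noise variance `λ = σ²/n ≤ R`, every estimator `θ̃` has worst-case risk over
`Θ↓(s,R)` at least `c·s·λ` with `c = Φ(-1)/2`. -/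
theorem minimax_lower_bound_ordered_sparse
    (p s : ℕ) (hs : 1 ≤ s) (hsp : s ≤ p)
    (lam R : ℝ) (hlam : 0 < lam) (hlamR : lam ≤ R)
    (est : (Fin p → ℝ) → Fin p → ℝ) (hest : Measurable est) :
    ENNReal.ofReal (stdNormalCDF (-1) / 2 * s * lam)
      ≤ ⨆ (θ : Fin p → ℝ) (_ : θ ∈ orderedSparseClass p s R),
          ∫⁻ y, ENNReal.ofReal (∑ i, (est y i - θ i) ^ 2)
            ∂(Measure.pi fun i => gaussianReal (θ i) lam.toNNReal) :=
  minimax_lower_bound_ordered_sparse_general p s hsp lam R hlam hlamR est hest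
end
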